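/- arXiv:nlin/0510035 — 2 statements merged into one kernel-verified Lean document; each statement's English description precedes it below -/
import Mathlib

section
/- Let k ∈ ℝ, N ∈ ℕ, and k₁,…,k_N ∈ ℝ. Define τ₁(x,t) = exp(kx − k²t) and τ₂(x,t) = 1 + Σ_{i=1}^{N} exp(kᵢ x + kᵢ(kᵢ − 2k) t). Then (D_t + D_x²) τ₁·τ₂ = 0 everywhere, where D_t f·g = f_t g − f g_t and D_x² f·g = f_{xx} g − 2 f_x g_x + f g_{xx}. -/
noncomputable def px (f : ℝ × ℝ → ℝ) (p : ℝ × ℝ) : ℝ := deriv (fun x => f (x, p.2)) p.1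
noncomputable def pt (f : ℝ × ℝ → ℝ) (p : ℝ × ℝ) : ℝ := deriv (fun t => f (p.1, t)) p.2
noncomputable def pxx (f : ℝ × ℝ → ℝ) : ℝ × ℝ → ℝ := px (px f)
noncomputable def Dx (f g : ℝ × ℝ → ℝ) (p : ℝ × ℝ) : ℝ := px f p * g p - f p * px g p
noncomputable def Dt (f g : ℝ × ℝ → ℝ) (p : ℝ × ℝ) : ℝ := pt f p * g p - f p * pt g p
noncomputable def Dx2 (f g : ℝ × ℝ → ℝ) (p : ℝ × ℝ) : ℝ :=
  pxx f p * g p - 2 * px f p * px g p + f p * pxx g p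

lemma hd_exp_lin (a b : ℝ) (x : ℝ) :
    HasDerivAt (fun x => Real.exp (a * x + b)) (a * Real.exp (a * x + b)) x := by
  have h : HasDerivAt (fun x : ℝ => a * x + b) a x := by
    simpa using ((hasDerivAt_id x).const_mul a).add_const b
  simpa [mul_comm] using h.exp

lemma deriv_exp_lin (a b : ℝ) (x : ℝ) :
    deriv (fun x => Real.exp (a * x + b)) x = a * Real.exp (a * x + b) :=
  (hd_exp_lin a b x).deriv

lemma hd_sum (N : ℕ) (a b : Fin N → ℝ) (x : ℝ) :
    HasDerivAt (fun x => 1 + ∑ i : Fin N, Real.exp (a i * x + b i))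
      (∑ i : Fin N, a i * Real.exp (a i * x + b i)) x := by
  have := HasDerivAt.sum (u := Finset.univ)
    (fun i _ => hd_exp_lin (a i) (b i) x)
  simpa using this.const_add 1

theorem stmt7 (k : ℝ) (N : ℕ) (ks : Fin N → ℝ) (τ₁ τ₂ : ℝ × ℝ → ℝ)
    (h1 : τ₁ = fun p => Real.exp (k * p.1 - k ^ 2 * p.2))
    (h2 : τ₂ = fun p => 1 + ∑ i : Fin N, Real.exp (ks i * p.1 + ks i * (ks i - 2 * k) * p.2)) :
    ∀ p : ℝ × ℝ, Dt τ₁ τ₂ p + Dx2 τ₁ τ₂ p = 0 := by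
  subst h1 h2
  rintro ⟨x, t⟩
  set E : Fin N → ℝ := fun i => Real.exp (ks i * x + ks i * (ks i - 2 * k) * t) with hE
  have hx1 : ∀ y : ℝ, px (fun p => Real.exp (k * p.1 - k ^ 2 * p.2)) (y, t)
      = k * Real.exp (k * y - k ^ 2 * t) := by
    intro y
    have := deriv_exp_lin k (-(k ^ 2 * t)) y
    simpa [px, sub_eq_add_neg] using this
  have hxx1 : pxx (fun p => Real.exp (k * p.1 - k ^ 2 * p.2)) (x, t)
      = k * (k * Real.exp (k * x - k ^ 2 * t)) := by
    have : px (fun p => Real.exp (k * p.1 - k ^ 2 * p.2))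
        = fun p => px (fun p => Real.exp (k * p.1 - k ^ 2 * p.2)) p := rfl
    simp only [pxx, px]
    have heq : (fun y => deriv (fun x => Real.exp (k * x - k ^ 2 * t)) y)
        = fun y => k * Real.exp (k * y + -(k ^ 2 * t)) := by
      funext y
      simpa [sub_eq_add_neg] using deriv_exp_lin k (-(k ^ 2 * t)) y
    calc deriv (fun y => deriv (fun x => Real.exp (k * x - k ^ 2 * t)) y) x
        = deriv (fun y => k * Real.exp (k * y + -(k ^ 2 * t))) x := by rw [heq]
      _ = k * (k * Real.exp (k * x + -(k ^ 2 * t))) := by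
          rw [deriv_const_mul _ (hd_exp_lin k _ x).differentiableAt,
            deriv_exp_lin]
      _ = k * (k * Real.exp (k * x - k ^ 2 * t)) := by ring_nf
  have ht1 : pt (fun p => Real.exp (k * p.1 - k ^ 2 * p.2)) (x, t)
      = -(k ^ 2) * Real.exp (k * x - k ^ 2 * t) := by
    have := deriv_exp_lin (-(k ^ 2)) (k * x) t
    simp only [pt]
    have heq : (fun s : ℝ => Real.exp (k * x - k ^ 2 * s))
        = fun s => Real.exp (-(k ^ 2) * s + k * x) := by
      funext s; ring_nf
    rw [heq, this]; ring_nf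
  have hx2 : ∀ y : ℝ, px (fun p => 1 + ∑ i : Fin N,
        Real.exp (ks i * p.1 + ks i * (ks i - 2 * k) * p.2)) (y, t)
      = ∑ i : Fin N, ks i * Real.exp (ks i * y + ks i * (ks i - 2 * k) * t) := by
    intro y
    simpa [px] using (hd_sum N ks (fun i => ks i * (ks i - 2 * k) * t) y).deriv
  have hxx2 : pxx (fun p => 1 + ∑ i : Fin N,
        Real.exp (ks i * p.1 + ks i * (ks i - 2 * k) * p.2)) (x, t)
      = ∑ i : Fin N, ks i * (ks i * Real.exp (ks i * x + ks i * (ks i - 2 * k) * t)) := by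
    simp only [pxx]
    have heq : (fun y => px (fun p => 1 + ∑ i : Fin N,
        Real.exp (ks i * p.1 + ks i * (ks i - 2 * k) * p.2)) (y, t))
        = fun y => ∑ i : Fin N, ks i * Real.exp (ks i * y + ks i * (ks i - 2 * k) * t) := by
      funext y; exact hx2 y
    have hd : HasDerivAt (fun y => ∑ i : Fin N,
          ks i * Real.exp (ks i * y + ks i * (ks i - 2 * k) * t))
        (∑ i : Fin N, ks i * (ks i * Real.exp (ks i * x + ks i * (ks i - 2 * k) * t))) x := by
      exact HasDerivAt.fun_sum fun i _ =>
        (hd_exp_lin (ks i) (ks i * (ks i - 2 * k) * t) x).const_mul (ks i)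
    simp only [px]
    rw [show (fun y => deriv (fun x => 1 + ∑ i : Fin N,
        Real.exp (ks i * x + ks i * (ks i - 2 * k) * t)) y)
        = fun y => ∑ i : Fin N, ks i * Real.exp (ks i * y + ks i * (ks i - 2 * k) * t) from
      funext fun y => by
        simpa using (hd_sum N ks (fun i => ks i * (ks i - 2 * k) * t) y).deriv]
    exact hd.deriv
  have ht2 : pt (fun p => 1 + ∑ i : Fin N,
        Real.exp (ks i * p.1 + ks i * (ks i - 2 * k) * p.2)) (x, t)
      = ∑ i : Fin N, ks i * (ks i - 2 * k) *
          Real.exp (ks i * x + ks i * (ks i - 2 * k) * t) := by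
    simp only [pt]
    have heq : (fun s : ℝ => 1 + ∑ i : Fin N,
          Real.exp (ks i * x + ks i * (ks i - 2 * k) * s))
        = fun s => 1 + ∑ i : Fin N,
          Real.exp (ks i * (ks i - 2 * k) * s + ks i * x) := by
      funext s; congr 1; apply Finset.sum_congr rfl; intro i _; ring_nf
    rw [heq]
    have := (hd_sum N (fun i => ks i * (ks i - 2 * k)) (fun i => ks i * x) t).deriv
    rw [this]
    exact Finset.sum_congr rfl fun i _ => by ring_nf
  simp only [Dt, Dx2]
  rw [hxx1, ht1, ht2, hxx2, hx1, hx2]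
  simp only [Finset.mul_sum]
  have hsum : ∑ i : Fin N, Real.exp (k * x - k ^ 2 * t) *
        (ks i * (ks i - 2 * k) * Real.exp (ks i * x + ks i * (ks i - 2 * k) * t))
      + ∑ i : Fin N, 2 * (k * Real.exp (k * x - k ^ 2 * t)) *
        (ks i * Real.exp (ks i * x + ks i * (ks i - 2 * k) * t))
      = ∑ i : Fin N, Real.exp (k * x - k ^ 2 * t) *
        (ks i * (ks i * Real.exp (ks i * x + ks i * (ks i - 2 * k) * t))) := by
    rw [← Finset.sum_add_distrib]
    exact Finset.sum_congr rfl fun i _ => by ring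
  linear_combination -hsum
end

section
/- Let k, k₁, k₂ ∈ ℝ. Set τ₁(x,t) = exp(kx − k²t) and τ₂(x,t) = 1 + exp(η₁) + exp(η₂) with ηᵢ = kᵢ x + kᵢ(kᵢ − 2k) t. Then (D_t + D_x²) τ₁·τ₂ = 0 everywhere; i.e., the two-term superposition requires no interaction term (the coupling constants vanish), in contrast with standard two-soliton tau functions. -/
lemma expAff (a c x : ℝ) :
    HasDerivAt (fun x => Real.exp (a * x + c)) (a * Real.exp (a * x + c)) x := by
  have h := (((hasDerivAt_id x).const_mul a).add_const c).exp
  simpa [mul_comm] using h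

noncomputable def Ef (a b : ℝ) : ℝ × ℝ → ℝ := fun p => Real.exp (a * p.1 + b * p.2)

lemma pxE (a b : ℝ) : px (Ef a b) = fun p => a * Ef a b p := by
  funext p
  exact (expAff a (b * p.2) p.1).deriv

lemma ptE (a b : ℝ) (p : ℝ × ℝ) : pt (Ef a b) p = b * Ef a b p := by
  have h := expAff b (a * p.1) p.2
  unfold pt Ef
  rw [show (fun t => Real.exp (a * p.1 + b * t)) = fun t => Real.exp (b * t + a * p.1) by
    funext t; ring_nf]
  simpa [add_comm] using h.deriv

theorem stmt16 (k k₁ k₂ : ℝ) (τ₁ τ₂ : ℝ × ℝ → ℝ)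
    (h1 : τ₁ = fun p => Real.exp (k * p.1 - k ^ 2 * p.2))
    (h2 : τ₂ = fun p => 1 + Real.exp (k₁ * p.1 + k₁ * (k₁ - 2 * k) * p.2)
      + Real.exp (k₂ * p.1 + k₂ * (k₂ - 2 * k) * p.2)) :
    ∀ p : ℝ × ℝ, Dt τ₁ τ₂ p + Dx2 τ₁ τ₂ p = 0 := by
  have e1 : τ₁ = Ef k (-k ^ 2) := by
    rw [h1]; funext p; unfold Ef; ring_nf
  set b₁ := k₁ * (k₁ - 2 * k) with hb₁
  set b₂ := k₂ * (k₂ - 2 * k) with hb₂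
  have e2 : τ₂ = fun p => 1 + Ef k₁ b₁ p + Ef k₂ b₂ p := by
    rw [h2]; rfl
  subst e1 e2
  -- derivatives of τ₁
  have hpx1 : px (Ef k (-k ^ 2)) = fun p => k * Ef k (-k ^ 2) p := pxE _ _
  have hpxx1 : ∀ p, pxx (Ef k (-k ^ 2)) p = k * (k * Ef k (-k ^ 2) p) := by
    intro p
    unfold pxx
    rw [hpx1]
    unfold px
    have h := ((expAff k (-k ^ 2 * p.2) p.1).const_mul k)
    simpa [Ef] using h.deriv
  have hpt1 : ∀ p, pt (Ef k (-k ^ 2)) p = -k ^ 2 * Ef k (-k ^ 2) p := ptE _ _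
  -- derivatives of τ₂
  have hpx2 : px (fun p => 1 + Ef k₁ b₁ p + Ef k₂ b₂ p)
      = fun p => k₁ * Ef k₁ b₁ p + k₂ * Ef k₂ b₂ p := by
    funext p
    unfold px
    have h := (((hasDerivAt_const p.1 (1:ℝ)).add (expAff k₁ (b₁ * p.2) p.1)).add
      (expAff k₂ (b₂ * p.2) p.1))
    simpa [Ef, Pi.add_def] using h.deriv
  have hpxx2 : ∀ p, pxx (fun p => 1 + Ef k₁ b₁ p + Ef k₂ b₂ p) p
      = k₁ * (k₁ * Ef k₁ b₁ p) + k₂ * (k₂ * Ef k₂ b₂ p) := by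
    intro p
    unfold pxx
    rw [hpx2]
    unfold px
    have h := ((expAff k₁ (b₁ * p.2) p.1).const_mul k₁).add
      ((expAff k₂ (b₂ * p.2) p.1).const_mul k₂)
    simpa [Ef, mul_assoc, Pi.add_def] using h.deriv
  have hpt2 : ∀ p, pt (fun p => 1 + Ef k₁ b₁ p + Ef k₂ b₂ p) p
      = b₁ * Ef k₁ b₁ p + b₂ * Ef k₂ b₂ p := by
    intro p
    unfold pt
    have h := ((hasDerivAt_const p.2 (1:ℝ)).add (expAff b₁ (k₁ * p.1) p.2)).add
      (expAff b₂ (k₂ * p.1) p.2)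
    rw [show (fun t => 1 + Ef k₁ b₁ (p.1, t) + Ef k₂ b₂ (p.1, t))
        = fun t => (1 + Real.exp (b₁ * t + k₁ * p.1)) + Real.exp (b₂ * t + k₂ * p.1) by
      funext t; unfold Ef; ring_nf]
    simpa [Ef, add_comm, Pi.add_def] using h.deriv
  intro p
  simp only [Dt, Dx2, hpx1, hpxx1, hpt1, hpx2, hpxx2, hpt2]
  simp only [hb₁, hb₂]
  ring
end
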